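/- arXiv:2304.13217 — 2 statements merged into one kernel-verified Lean document; each statement's English description precedes it below -/
import Mathlib

section
/- Let $S \in \mathcal{F}_{k,r}$, let $f_1 \in A \setminus S$, and let $X_1$ be the minimal tight set with respect to $S$ containing $f_1$ (or $V$ if none exists). Suppose $f'_1 \in S$ satisfies $\mathrm{head}(f'_1) = \mathrm{head}(f_1)$ and $f'_1$ is contained in $X_1$, and set $S' = S - f'_1 + f_1$ (which is feasible). Then the minimal tight set $X'_1$ with respect to $S'$ containing $f'_1$ (or $V$ if none exists) equals $X_1$. -/
open Finset

variable {V A : Type*}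

/-- Number of arcs of `F` entering the vertex set `X`. -/
def inDeg [DecidableEq V] (hd tl : A → V) (F : Finset A) (X : Finset V) : ℕ :=
  (F.filter (fun a => hd a ∈ X ∧ tl a ∉ X)).card

/-- Number of arcs of `F` with head `v`. -/
def vDeg [DecidableEq V] (hd : A → V) (F : Finset A) (v : V) : ℕ :=
  (F.filter (fun a => hd a = v)).card

/-- The vertex set `X` contains the arc `a` (both endpoints in `X`). -/
def ArcIn (hd tl : A → V) (X : Finset V) (a : A) : Prop :=
  hd a ∈ X ∧ tl a ∈ X

/-- `F` contains a directed cycle. -/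
def HasDicycle (hd tl : A → V) (F : Finset A) : Prop :=
  ∃ n : ℕ, 0 < n ∧ ∃ (v : Fin (n + 1) → V) (e : Fin n → A),
    (∀ i : Fin n, e i ∈ F ∧ tl (e i) = v i.castSucc ∧ hd (e i) = v i.succ) ∧
    v 0 = v (Fin.last n)

/-- `F` is an `r`-arborescence: acyclic, every non-root vertex has exactly one
incoming arc, and `r` has none. -/
def IsArb [DecidableEq V] (hd tl : A → V) (r : V) (F : Finset A) : Prop :=
  ¬ HasDicycle hd tl F ∧ (∀ v : V, v ≠ r → inDeg hd tl F {v} = 1) ∧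
    inDeg hd tl F {r} = 0

/-- `F` can be partitioned into `k` arc-disjoint `r`-arborescences. -/
def Feasible [DecidableEq V] [DecidableEq A] (hd tl : A → V) (k : ℕ) (r : V)
    (F : Finset A) : Prop :=
  ∃ P : Fin k → Finset A, (∀ i j : Fin k, i ≠ j → Disjoint (P i) (P j)) ∧
    Finset.univ.biUnion P = F ∧ ∀ i : Fin k, IsArb hd tl r (P i)

/-- `F` can be partitioned into `k` arc-disjoint arborescences with arbitrary roots. -/
def FeasibleAny [DecidableEq V] [DecidableEq A] (hd tl : A → V) (k : ℕ)
    (F : Finset A) : Prop :=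
  ∃ P : Fin k → Finset A, (∀ i j : Fin k, i ≠ j → Disjoint (P i) (P j)) ∧
    Finset.univ.biUnion P = F ∧ ∀ i : Fin k, ∃ r : V, IsArb hd tl r (P i)

/-- `X` is a tight set with respect to `S`: it avoids the root and exactly `k`
arcs of `S` enter it. -/
def Tight [DecidableEq V] (hd tl : A → V) (S : Finset A) (k : ℕ) (r : V)
    (X : Finset V) : Prop :=
  r ∉ X ∧ inDeg hd tl S X = k

/-- `X` is the inclusionwise minimal tight set with respect to `S` containing the
arc `f`, or `X = V` if no tight set contains `f`. -/
def MinTightFor [Fintype V] [DecidableEq V] (hd tl : A → V) (S : Finset A)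
    (k : ℕ) (r : V) (f : A) (X : Finset V) : Prop :=
  (Tight hd tl S k r X ∧ ArcIn hd tl X f ∧
    ∀ Y : Finset V, Tight hd tl S k r Y → ArcIn hd tl Y f → X ⊆ Y) ∨
  ((¬ ∃ Y : Finset V, Tight hd tl S k r Y ∧ ArcIn hd tl Y f) ∧ X = Finset.univ)

/-- A directed cycle of length `m` in the auxiliary digraph `H` on `[p]`, whose
arcs are the pairs `(i, j)` such that `X i` contains `e j`. -/
def AuxCycle {p : ℕ} (hd tl : A → V) (X : Fin p → Finset V) (e : Fin p → A)
    (m : ℕ) : Prop :=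
  ∃ c : Fin m → Fin p, Function.Injective c ∧
    ∀ i : Fin m, ArcIn hd tl (X (c i)) (e (c ⟨(i.val + 1) % m, Nat.mod_lt _ i.pos⟩))

/-- `seq` is a reconfiguration sequence of length `ℓ` from `S` to `T` within the
family described by `Feas`. -/
def IsReconfig [DecidableEq A] (Feas : Finset A → Prop) (S T : Finset A) (ℓ : ℕ)
    (seq : Fin (ℓ + 1) → Finset A) : Prop :=
  seq 0 = S ∧ seq (Fin.last ℓ) = T ∧ (∀ i, Feas (seq i)) ∧
    ∀ i : Fin ℓ, (seq i.castSucc \ seq i.succ).card = 1 ∧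
      (seq i.succ \ seq i.castSucc).card = 1

lemma inDeg_insert [DecidableEq V] [DecidableEq A] (hd tl : A → V) {a : A} {F : Finset A}
    (ha : a ∉ F) (X : Finset V) :
    inDeg hd tl (insert a F) X
      = inDeg hd tl F X + (if hd a ∈ X ∧ tl a ∉ X then 1 else 0) := by
  unfold inDeg
  rw [Finset.filter_insert]
  split
  · rw [Finset.card_insert_of_notMem (fun h => ha (Finset.mem_of_mem_filter a h))]
  · simp

lemma exists_periodic_point {α : Type*} [Fintype α] (g : α → α) (x : α) :
    ∃ (y : α) (m : ℕ), 0 < m ∧ g^[m] y = y := by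
  obtain ⟨i, j, hij, hfe⟩ := Fintype.exists_ne_map_eq_of_card_lt
    (fun j : Fin (Fintype.card α + 1) => g^[j.val] x) (by simp)
  rcases Ne.lt_or_gt hij with hlt | hlt
  · refine ⟨g^[i.val] x, j.val - i.val, by
      have : i.val < j.val := hlt
      omega, ?_⟩
    rw [← Function.iterate_add_apply, show j.val - i.val + i.val = j.val by
      have : i.val < j.val := hlt; omega]
    exact hfe.symm
  · refine ⟨g^[j.val] x, i.val - j.val, by
      have : j.val < i.val := hlt
      omega, ?_⟩
    rw [← Function.iterate_add_apply, show i.val - j.val + j.val = i.val by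
      have : j.val < i.val := hlt; omega]
    exact hfe

lemma arb_cut [DecidableEq V] (hd tl : A → V) (r : V) (F : Finset A)
    (hF : IsArb hd tl r F) (Y : Finset V) (hne : Y.Nonempty) (hr : r ∉ Y) :
    1 ≤ inDeg hd tl F Y := by
  obtain ⟨hacyc, hdeg, -⟩ := hF
  by_contra hcon
  have h0 : inDeg hd tl F Y = 0 := by omega
  have hstep : ∀ w : {x // x ∈ Y}, ∃ a : A, a ∈ F ∧ hd a = w.val ∧ tl a ∈ Y := by
    rintro ⟨w, hw⟩
    have hwr : w ≠ r := fun h => hr (h ▸ hw)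
    have h1 := hdeg w hwr
    have hnefil : (F.filter
        (fun a => hd a ∈ ({w} : Finset V) ∧ tl a ∉ ({w} : Finset V))).Nonempty := by
      rw [← Finset.card_pos]
      rw [inDeg] at h1
      omega
    obtain ⟨a, ha⟩ := hnefil
    simp only [Finset.mem_filter, Finset.mem_singleton] at ha
    obtain ⟨haF, hha, hta⟩ := ha
    refine ⟨a, haF, hha, ?_⟩
    by_contra htY
    have hmem : a ∈ F.filter (fun a => hd a ∈ Y ∧ tl a ∉ Y) := by
      simp only [Finset.mem_filter]
      exact ⟨haF, hha ▸ hw, htY⟩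
    have := Finset.card_pos.mpr ⟨a, hmem⟩
    rw [inDeg] at h0
    omega
  choose e heF heh het using hstep
  obtain ⟨w0, hw0⟩ := hne
  let g : {x // x ∈ Y} → {x // x ∈ Y} := fun w => ⟨tl (e w), het w⟩
  obtain ⟨y, m, hmpos, hcyc⟩ := exists_periodic_point g ⟨w0, hw0⟩
  have hgval : ∀ n : ℕ, (g^[n + 1] y).val = tl (e (g^[n] y)) := by
    intro n
    rw [Function.iterate_succ_apply']
  apply hacyc
  refine ⟨m, hmpos, fun i => (g^[m - i.val] y).val, fun i => e (g^[m - i.val - 1] y), ?_, ?_⟩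
  · intro i
    have hi : i.val < m := i.isLt
    have hcs : i.castSucc.val = i.val := rfl
    have hsc : i.succ.val = i.val + 1 := rfl
    refine ⟨heF _, ?_, ?_⟩
    · show tl (e (g^[m - i.val - 1] y)) = (g^[m - i.castSucc.val] y).val
      rw [← hgval (m - i.val - 1), hcs, show m - i.val - 1 + 1 = m - i.val by omega]
    · show hd (e (g^[m - i.val - 1] y)) = (g^[m - i.succ.val] y).val
      rw [heh, hsc, show m - (i.val + 1) = m - i.val - 1 by omega]
  · show (g^[m - (0 : Fin (m + 1)).val] y).val = (g^[m - (Fin.last m).val] y).val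
    simp [hcyc]

lemma inDeg_biUnion [DecidableEq V] [DecidableEq A] (hd tl : A → V) {k : ℕ}
    (P : Fin k → Finset A) (hdisj : ∀ i j, i ≠ j → Disjoint (P i) (P j)) (Y : Finset V) :
    inDeg hd tl (Finset.univ.biUnion P) Y = ∑ i, inDeg hd tl (P i) Y := by
  unfold inDeg
  rw [Finset.filter_biUnion, Finset.card_biUnion]
  intro i _ j _ hij
  exact Finset.disjoint_filter_filter (hdisj i j hij)

lemma feasible_cut [DecidableEq V] [DecidableEq A] (hd tl : A → V) (k : ℕ) (r : V)
    {S : Finset A} (hS : Feasible hd tl k r S) (Y : Finset V) (hne : Y.Nonempty)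
    (hr : r ∉ Y) : k ≤ inDeg hd tl S Y := by
  obtain ⟨P, hdisj, hcup, harb⟩ := hS
  rw [← hcup, inDeg_biUnion hd tl P hdisj]
  calc k = ∑ _i : Fin k, 1 := by simp
    _ ≤ ∑ i, inDeg hd tl (P i) Y :=
      Finset.sum_le_sum (fun i _ => arb_cut hd tl r (P i) (harb i) Y hne hr)

theorem stmt_2 [Fintype V] [DecidableEq V] [DecidableEq A] (hd tl : A → V)
    (k : ℕ) (r : V) (S : Finset A) (hS : Feasible hd tl k r S)
    (f₁ : A) (hf₁ : f₁ ∉ S)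
    (X₁ : Finset V) (hX₁ : MinTightFor hd tl S k r f₁ X₁)
    (f₁' : A) (hf₁' : f₁' ∈ S) (hhead : hd f₁' = hd f₁)
    (hin : ArcIn hd tl X₁ f₁')
    (X₁' : Finset V)
    (hX₁' : MinTightFor hd tl (insert f₁ (S.erase f₁')) k r f₁' X₁') :
    X₁' = X₁ := by
  have hcut := feasible_cut hd tl k r hS
  have hf₁'ne : f₁' ≠ f₁ := fun h => hf₁ (h ▸ hf₁')
  set S' := insert f₁ (S.erase f₁') with hS'def
  have hins : insert f₁' S' = insert f₁ S := by
    rw [hS'def, Finset.insert_comm, Finset.insert_erase hf₁']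
  have hf₁'S' : f₁' ∉ S' := by
    simp [hS'def, hf₁'ne]
  have hkey : ∀ Z : Finset V,
      inDeg hd tl S Z + (if hd f₁ ∈ Z ∧ tl f₁ ∉ Z then 1 else 0)
        = inDeg hd tl S' Z + (if hd f₁' ∈ Z ∧ tl f₁' ∉ Z then 1 else 0) := by
    intro Z
    rw [← inDeg_insert hd tl hf₁ Z, ← inDeg_insert hd tl hf₁'S' Z, hins]
  rcases hX₁ with ⟨⟨hrX, hdegX⟩, hfin, hmin⟩ | ⟨hnone, hXeq⟩
  · -- genuine minimal tight set case
    have htS' : Tight hd tl S' k r X₁ := by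
      refine ⟨hrX, ?_⟩
      have h := hkey X₁
      rw [if_neg (show ¬(hd f₁ ∈ X₁ ∧ tl f₁ ∉ X₁) from fun hc => hc.2 hfin.2),
        if_neg (show ¬(hd f₁' ∈ X₁ ∧ tl f₁' ∉ X₁) from fun hc => hc.2 hin.2)] at h
      omega
    rcases hX₁' with ⟨⟨hrX', hdegX'⟩, hfin', hmin'⟩ | ⟨hnone', -⟩
    · apply Finset.Subset.antisymm
      · exact hmin' X₁ htS' hin
      · have h := hkey X₁'
        rw [if_neg (show ¬(hd f₁' ∈ X₁' ∧ tl f₁' ∉ X₁') from fun hc => hc.2 hfin'.2)] at h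
        have hhead' : hd f₁ ∈ X₁' := by rw [← hhead]; exact hfin'.1
        have hcutX := hcut X₁' ⟨hd f₁', hfin'.1⟩ hrX'
        have htl : tl f₁ ∈ X₁' := by
          by_contra htl
          rw [if_pos (show hd f₁ ∈ X₁' ∧ tl f₁ ∉ X₁' from ⟨hhead', htl⟩)] at h
          omega
        rw [if_neg (show ¬(hd f₁ ∈ X₁' ∧ tl f₁ ∉ X₁') from fun hc => hc.2 htl)] at h
        exact hmin X₁' ⟨hrX', by omega⟩ ⟨hhead', htl⟩
    · exact absurd ⟨X₁, htS', hin⟩ hnone'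
  · -- X₁ = univ case
    have hnone2 : ¬ ∃ Y : Finset V, Tight hd tl S' k r Y ∧ ArcIn hd tl Y f₁' := by
      rintro ⟨Y, ⟨hrY, hdegY⟩, hY1, hY2⟩
      have h := hkey Y
      rw [if_neg (show ¬(hd f₁' ∈ Y ∧ tl f₁' ∉ Y) from fun hc => hc.2 hY2)] at h
      have hhead' : hd f₁ ∈ Y := by rw [← hhead]; exact hY1
      have hcutY := hcut Y ⟨hd f₁', hY1⟩ hrY
      have htl : tl f₁ ∈ Y := by
        by_contra htl
        rw [if_pos (show hd f₁ ∈ Y ∧ tl f₁ ∉ Y from ⟨hhead', htl⟩)] at h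
        omega
      rw [if_neg (show ¬(hd f₁ ∈ Y ∧ tl f₁ ∉ Y) from fun hc => hc.2 htl)] at h
      exact hnone ⟨Y, ⟨hrY, by omega⟩, ⟨hhead', htl⟩⟩
    rcases hX₁' with ⟨ht', hfin', -⟩ | ⟨-, hXeq'⟩
    · exact absurd ⟨X₁', ht', hfin'⟩ hnone2
    · rw [hXeq', hXeq]
end

section
/- Let $S, T \in \mathcal{F}_{k,r}$, with $S \setminus T = \{e_1,\dots,e_p\}$, $T \setminus S = \{f_1,\dots,f_p\}$, $\mathrm{head}(e_i)=\mathrm{head}(f_i)$ for all $i$, and minimal tight sets $X_i$ with respect to $S$ containing $f_i$. Define the auxiliary digraph $H$ on $[p]$ with arc $(i,j)$ whenever $X_i$ contains $e_j$. If $H$ has a directed path $P$ such that $\bigcup_{i \in V(P)} X_i$ contains some arc $e \in S$, then there exists $i \in V(P)$ such that $X_i$ itself contains $e$. -/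
open Finset

variable {V A : Type*}

lemma arb_enters [Fintype V] [DecidableEq V] (hd tl : A → V) (r : V) (F : Finset A)
    (hF : IsArb hd tl r F) (Z : Finset V) (hne : Z.Nonempty) (hr : r ∉ Z) :
    1 ≤ inDeg hd tl F Z := by
  by_contra h
  push_neg at h
  have hz : (F.filter (fun a => hd a ∈ Z ∧ tl a ∉ Z)) = ∅ := by
    rw [Nat.lt_one_iff, inDeg, Finset.card_eq_zero] at h
    exact h
  have key : ∀ v ∈ Z, ∃ a ∈ F, hd a = v ∧ tl a ∈ Z := by
    intro v hv
    have hv1 : inDeg hd tl F {v} = 1 := hF.2.1 v (by rintro rfl; exact hr hv)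
    have hne1 : (F.filter (fun a => hd a ∈ ({v} : Finset V) ∧ tl a ∉ ({v} : Finset V))).Nonempty := by
      rw [← Finset.card_pos]
      rw [inDeg] at hv1
      omega
    obtain ⟨a, haa⟩ := hne1
    simp only [Finset.mem_filter, Finset.mem_singleton] at haa
    refine ⟨a, haa.1, haa.2.1, ?_⟩
    by_contra htl
    have hmem : a ∈ F.filter (fun a => hd a ∈ Z ∧ tl a ∉ Z) := by
      simp only [Finset.mem_filter]
      exact ⟨haa.1, by rw [haa.2.1]; exact hv, htl⟩
    rw [hz] at hmem
    exact absurd hmem (Finset.notMem_empty a)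
  choose arc harcF harchd harctl using key
  obtain ⟨v0, hv0⟩ := hne
  let g : {x // x ∈ Z} → {x // x ∈ Z} := fun x => ⟨tl (arc x.1 x.2), harctl x.1 x.2⟩
  obtain ⟨m1, m2, hne12, heq⟩ :
      ∃ m1 m2 : ℕ, m1 ≠ m2 ∧ g^[m1] ⟨v0, hv0⟩ = g^[m2] ⟨v0, hv0⟩ :=
    Finite.exists_ne_map_eq_of_infinite _
  wlog hlt : m1 < m2 generalizing m1 m2
  · exact this m2 m1 hne12.symm heq.symm (by omega)
  set c := m2 - m1 with hc
  have hcpos : 0 < c := by omega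
  set u : {x // x ∈ Z} := g^[m1] ⟨v0, hv0⟩ with hu
  have hper : g^[c] u = u := by
    rw [hu, ← Function.iterate_add_apply]
    have h2 : c + m1 = m2 := by omega
    rw [h2, ← heq, hu]
  apply hF.1
  refine ⟨c, hcpos, fun j : Fin (c + 1) => (g^[c - j.val] u).1,
    fun j : Fin c => arc (g^[c - j.val - 1] u).1 (g^[c - j.val - 1] u).2, ?_, ?_⟩
  · intro i
    refine ⟨harcF _ _, ?_, ?_⟩
    · show tl (arc _ _) = (g^[c - i.val] u).1
      have : g (g^[c - i.val - 1] u) = g^[c - i.val] u := by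
        rw [← Function.iterate_succ_apply' g]
        congr 1
        omega
      calc tl (arc (g^[c - i.val - 1] u).1 (g^[c - i.val - 1] u).2)
          = (g (g^[c - i.val - 1] u)).1 := rfl
        _ = (g^[c - i.val] u).1 := by rw [this]
    · show hd (arc _ _) = (g^[c - (i.val + 1)] u).1
      rw [harchd]
      have h3 : c - i.val - 1 = c - (i.val + 1) := by omega
      rw [h3]
  · show (g^[c - 0] u).1 = (g^[c - c] u).1
    simp [hper]

lemma edmonds [Fintype V] [DecidableEq V] [DecidableEq A] (hd tl : A → V) (k : ℕ) (r : V)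
    (S : Finset A) (hS : Feasible hd tl k r S) (Z : Finset V) (hne : Z.Nonempty)
    (hr : r ∉ Z) : k ≤ inDeg hd tl S Z := by
  obtain ⟨P, hdisj, hun, harb⟩ := hS
  have hsum : inDeg hd tl S Z = ∑ i : Fin k, inDeg hd tl (P i) Z := by
    rw [inDeg, ← hun, Finset.filter_biUnion, Finset.card_biUnion]
    · rfl
    · intro i _ j _ hij
      exact (hdisj i j hij).mono (Finset.filter_subset _ _) (Finset.filter_subset _ _)
  rw [hsum]
  calc k = ∑ _i : Fin k, 1 := by simp
    _ ≤ _ := Finset.sum_le_sum fun i _ => arb_enters hd tl r (P i) (harb i) Z hne hr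

lemma inDeg_eq_sum [DecidableEq V] (hd tl : A → V) (S : Finset A) (X : Finset V) :
    inDeg hd tl S X = ∑ a ∈ S, (if hd a ∈ X ∧ tl a ∉ X then 1 else 0) := by
  rw [inDeg, Finset.card_filter]

lemma tight_union [DecidableEq V] (hd tl : A → V) (S : Finset A) (k : ℕ) (r : V)
    (LB : ∀ Z : Finset V, Z.Nonempty → r ∉ Z → k ≤ inDeg hd tl S Z)
    (X Y : Finset V) (hXt : Tight hd tl S k r X) (hYt : Tight hd tl S k r Y)
    (hI : (X ∩ Y).Nonempty) :
    Tight hd tl S k r (X ∪ Y) ∧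
      ∀ a ∈ S, ArcIn hd tl (X ∪ Y) a → ArcIn hd tl X a ∨ ArcIn hd tl Y a := by
  have hrU : r ∉ X ∪ Y := by
    simp only [Finset.mem_union]
    push_neg
    exact ⟨hXt.1, hYt.1⟩
  have hUne : (X ∪ Y).Nonempty := hI.mono (Finset.inter_subset_left.trans Finset.subset_union_left)
  have hUk : k ≤ inDeg hd tl S (X ∪ Y) := LB _ hUne hrU
  have hIk : k ≤ inDeg hd tl S (X ∩ Y) :=
    LB _ hI (fun h => hXt.1 (Finset.mem_inter.1 h).1)
  have hpt : ∀ a ∈ S,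
      ((if hd a ∈ X ∪ Y ∧ tl a ∉ X ∪ Y then 1 else 0)
        + (if hd a ∈ X ∩ Y ∧ tl a ∉ X ∩ Y then 1 else 0) : ℕ)
      ≤ (if hd a ∈ X ∧ tl a ∉ X then 1 else 0) + (if hd a ∈ Y ∧ tl a ∉ Y then 1 else 0) := by
    intro a _
    by_cases h1 : hd a ∈ X <;> by_cases h2 : hd a ∈ Y <;> by_cases h3 : tl a ∈ X <;>
      by_cases h4 : tl a ∈ Y <;>
      simp [Finset.mem_union, Finset.mem_inter, h1, h2, h3, h4]
  have hsum : inDeg hd tl S (X ∪ Y) + inDeg hd tl S (X ∩ Y)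
      ≤ inDeg hd tl S X + inDeg hd tl S Y := by
    simp only [inDeg_eq_sum, ← Finset.sum_add_distrib]
    exact Finset.sum_le_sum hpt
  have hXk := hXt.2
  have hYk := hYt.2
  have hUeq : inDeg hd tl S (X ∪ Y) = k := by omega
  have hIeq : inDeg hd tl S (X ∩ Y) = k := by omega
  refine ⟨⟨hrU, hUeq⟩, ?_⟩
  have hsum' : (∑ a ∈ S, ((if hd a ∈ X ∪ Y ∧ tl a ∉ X ∪ Y then 1 else 0)
        + (if hd a ∈ X ∩ Y ∧ tl a ∉ X ∩ Y then 1 else 0) : ℕ))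
      = ∑ a ∈ S, ((if hd a ∈ X ∧ tl a ∉ X then 1 else 0)
        + (if hd a ∈ Y ∧ tl a ∉ Y then 1 else 0) : ℕ) := by
    simp only [Finset.sum_add_distrib, ← inDeg_eq_sum]
    omega
  have hEq := (Finset.sum_eq_sum_iff_of_le hpt).1 hsum'
  intro a ha hAU
  obtain ⟨hh, ht⟩ := hAU
  have heqa := hEq a ha
  by_cases h1 : hd a ∈ X <;> by_cases h2 : hd a ∈ Y <;> by_cases h3 : tl a ∈ X <;>
    by_cases h4 : tl a ∈ Y <;>
    simp only [Finset.mem_union, Finset.mem_inter, h1, h2, h3, h4, ArcIn, and_true,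
      and_false, true_and, false_and, not_true, not_false_iff, or_true, true_or,
      if_true, if_false, not_or, not_and, not_not] at heqa hh ht ⊢ <;>
    first | (left; exact ⟨h1, h3⟩) | (right; exact ⟨h2, h4⟩) | tauto | omega

theorem stmt_4 [Fintype V] [DecidableEq V] [DecidableEq A] (hd tl : A → V)
    (k p : ℕ) (r : V)
    (S T : Finset A) (hS : Feasible hd tl k r S) (hT : Feasible hd tl k r T)
    (e f : Fin p → A)
    (he_inj : Function.Injective e) (hf_inj : Function.Injective f)
    (he_range : S \ T = Finset.image e Finset.univ)
    (hf_range : T \ S = Finset.image f Finset.univ)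
    (h_heads : ∀ i : Fin p, hd (e i) = hd (f i))
    (X : Fin p → Finset V) (hX : ∀ i : Fin p, MinTightFor hd tl S k r (f i) (X i))
    (n : ℕ) (w : Fin (n + 1) → Fin p) (hw_inj : Function.Injective w)
    (hpath : ∀ i : Fin n, ArcIn hd tl (X (w i.castSucc)) (e (w i.succ)))
    (a : A) (ha : a ∈ S)
    (hin : ArcIn hd tl (Finset.univ.biUnion fun i : Fin (n + 1) => X (w i)) a) :
    ∃ i : Fin (n + 1), ArcIn hd tl (X (w i)) a := by
  classical
  by_cases huniv : ∃ i : Fin (n + 1), X (w i) = Finset.univ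
  · obtain ⟨i, hi⟩ := huniv
    exact ⟨i, by simp [ArcIn, hi]⟩
  push_neg at huniv
  have hXt : ∀ i : Fin (n + 1),
      Tight hd tl S k r (X (w i)) ∧ ArcIn hd tl (X (w i)) (f (w i)) := by
    intro i
    rcases hX (w i) with h | h
    · exact ⟨h.1, h.2.1⟩
    · exact absurd h.2 (huniv i)
  have LB : ∀ Z : Finset V, Z.Nonempty → r ∉ Z → k ≤ inDeg hd tl S Z :=
    fun Z h1 h2 => edmonds hd tl k r S hS Z h1 h2
  set Y : ℕ → Finset V := fun m =>
    (Finset.univ.filter (fun i : Fin (n + 1) => (i : ℕ) ≤ m)).biUnion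
      (fun i => X (w i)) with hY
  have key : ∀ m, m ≤ n → Tight hd tl S k r (Y m) ∧
      ∀ b ∈ S, ArcIn hd tl (Y m) b →
        ∃ i : Fin (n + 1), (i : ℕ) ≤ m ∧ ArcIn hd tl (X (w i)) b := by
    intro m
    induction m with
    | zero =>
      intro _
      have hfil : (Finset.univ.filter (fun i : Fin (n + 1) => (i : ℕ) ≤ 0))
          = {(0 : Fin (n + 1))} := by
        ext i
        rw [Finset.mem_filter, Finset.mem_singleton, Fin.ext_iff]
        simp
      have h0 : Y 0 = X (w 0) := by
        rw [hY]
        simp only [hfil, Finset.singleton_biUnion]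
      rw [h0]
      exact ⟨(hXt 0).1, fun b _ hb => ⟨0, le_rfl, hb⟩⟩
    | succ m ih =>
      intro hm1
      obtain ⟨ihT, ihS⟩ := ih (by omega)
      have hlt : m < n := hm1
      set j : Fin (n + 1) := ⟨m + 1, by omega⟩ with hj
      have hYsucc : Y (m + 1) = Y m ∪ X (w j) := by
        ext x
        simp only [hY, Finset.mem_biUnion, Finset.mem_filter, Finset.mem_univ, true_and,
          Finset.mem_union]
        constructor
        · rintro ⟨i, hi, hx⟩
          rcases Nat.lt_or_ge (i : ℕ) (m + 1) with h | h
          · exact Or.inl ⟨i, by omega, hx⟩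
          · have hij : i = j := Fin.ext (by simp only [hj]; omega)
            exact Or.inr (hij ▸ hx)
        · rintro (⟨i, hi, hx⟩ | hx)
          · exact ⟨i, by omega, hx⟩
          · exact ⟨j, by simp [hj], hx⟩
      have hpa := hpath ⟨m, hlt⟩
      have hmemXm : hd (e (w j)) ∈ X (w (⟨m, by omega⟩ : Fin (n + 1))) := hpa.1
      have hmemYm : hd (e (w j)) ∈ Y m := by
        rw [hY]
        exact Finset.mem_biUnion.2 ⟨⟨m, by omega⟩, by simp, hmemXm⟩
      have hmemXj : hd (e (w j)) ∈ X (w j) := by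
        rw [h_heads]
        exact (hXt j).2.1
      have hI : (Y m ∩ X (w j)).Nonempty :=
        ⟨_, Finset.mem_inter.2 ⟨hmemYm, hmemXj⟩⟩
      obtain ⟨hUt, hsplit⟩ := tight_union hd tl S k r LB _ _ ihT (hXt j).1 hI
      rw [hYsucc]
      refine ⟨hUt, ?_⟩
      intro b hb hbU
      rcases hsplit b hb hbU with h | h
      · obtain ⟨i, hi, hxi⟩ := ihS b hb h
        exact ⟨i, by omega, hxi⟩
      · exact ⟨j, by simp [hj], h⟩
  obtain ⟨-, hfin⟩ := key n le_rfl
  have hYn : Y n = Finset.univ.biUnion fun i : Fin (n + 1) => X (w i) := by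
    have hfil : (Finset.univ.filter (fun i : Fin (n + 1) => (i : ℕ) ≤ n)) = Finset.univ :=
      Finset.filter_true_of_mem (fun i _ => Nat.lt_succ_iff.1 i.isLt)
    rw [hY]
    simp only [hfil]
  obtain ⟨i, -, hi⟩ := hfin a ha (by rw [hYn]; exact hin)
  exact ⟨i, hi⟩
end
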